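/- arXiv:0705.2467 — 2 statements merged into one kernel-verified Lean document; each statement's English description precedes it below -/
import Mathlib

section
/- Let A, B, Λ be d×d complex matrices with Λ diagonal, related by B = 3(1 − Λ − A/2) (equivalently A and B are given in terms of Λ and a matrix X via A = (31/36)(1−Λ) − (1/864)(X + [Λ,X]) and B = (41/24)(1−Λ) + (1/576)(X + [Λ,X])). Suppose A² = A. Then the condition B(B−1)(B−2) = 0 is equivalent to the matrix equation AΛA = −(17/18)A − 2(AΛ² + ΛAΛ + Λ²A) + 3(AΛ + ΛA) − 4Λ³ + 8Λ² − (44/9)Λ + (8/9)·1. -/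
/-- With `Λ` diagonal, `A = (31/36)(1-Λ) - (1/864)(X + [Λ,X])`,
`B = 3(1 - Λ - A/2)` and `A² = A`, the condition `B(B-1)(B-2) = 0` is equivalent
to the quadratic matrix equation
`AΛA = -(17/18)A - 2(AΛ² + ΛAΛ + Λ²A) + 3(AΛ + ΛA) - 4Λ³ + 8Λ² - (44/9)Λ + (8/9)·1`. -/
theorem statement3 (d : ℕ) (l : Fin d → ℂ) (Λ A X B : Matrix (Fin d) (Fin d) ℂ)
    (hΛ : Λ = Matrix.diagonal l)
    (hAX : A = (31/36 : ℂ) • (1 - Λ) - (1/864 : ℂ) • (X + (Λ * X - X * Λ)))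
    (hBX : B = (41/24 : ℂ) • (1 - Λ) + (1/576 : ℂ) • (X + (Λ * X - X * Λ)))
    (hBA : B = (3 : ℂ) • (1 - Λ) - (3/2 : ℂ) • A)
    (hA : A * A = A) :
    B * (B - 1) * (B - 2) = 0 ↔
      A * Λ * A =
        -((17/18 : ℂ) • A) - (2 : ℂ) • (A * Λ ^ 2 + Λ * A * Λ + Λ ^ 2 * A)
          + (3 : ℂ) • (A * Λ + Λ * A) - (4 : ℂ) • Λ ^ 3 + (8 : ℂ) • Λ ^ 2
          - (44/9 : ℂ) • Λ + (8/9 : ℂ) • (1 : Matrix (Fin d) (Fin d) ℂ) := by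
  set R : Matrix (Fin d) (Fin d) ℂ :=
        -((17/18 : ℂ) • A) - (2 : ℂ) • (A * Λ ^ 2 + Λ * A * Λ + Λ ^ 2 * A)
          + (3 : ℂ) • (A * Λ + Λ * A) - (4 : ℂ) • Λ ^ 3 + (8 : ℂ) • Λ ^ 2
          - (44/9 : ℂ) • Λ + (8/9 : ℂ) • (1 : Matrix (Fin d) (Fin d) ℂ) with hR
  have key : B * (B - 1) * (B - 2) + (27/4 : ℂ) • (A * Λ * A - R) =
      (81/8 : ℂ) • (A * A - A) - (27/4 : ℂ) • (Λ * (A * A - A))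
        - (27/4 : ℂ) • ((A * A - A) * Λ) - (27/8 : ℂ) • ((A * A - A) * A) := by
    rw [hBA, hR]
    noncomm_ring
    module
  rw [hA, sub_self] at key
  simp only [Matrix.mul_zero, Matrix.zero_mul, smul_zero, sub_zero] at key
  have hE : B * (B - 1) * (B - 2) = -((27/4 : ℂ) • (A * Λ * A - R)) :=
    eq_neg_of_add_eq_zero_left key
  constructor
  · intro h
    rw [h] at hE
    have := hE.symm
    rw [neg_eq_zero, smul_eq_zero] at this
    rcases this with h' | h'
    · norm_num at h'
    · exact sub_eq_zero.mp h'
  · intro h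
    rw [hE, sub_eq_zero.mpr h, smul_zero, neg_zero]
end

section
/- With A = (31/36)(1−Λ) − (1/864)(X + [Λ,X]) and B = (41/24)(1−Λ) + (1/576)(X + [Λ,X]), where Λ is diagonal and X is any d×d matrix, one has Tr(X) = 4(62β₁ + 124β₂ − 123α) and Tr(Λ) = d − α/2 − (β₁ + 2β₂)/3, where α = Tr(A), β₁ = 2Tr(B) − Tr(B²), β₂ = (Tr(B²) − Tr(B))/2, assuming A²=A and B(B−1)(B−2)=0. In particular Tr(X) is an integer divisible by 4 and congruent to 4α modulo 248. -/
/-- With `A = (31/36)(1-Λ) - (1/864)(X + [Λ,X])`, `B = (41/24)(1-Λ) + (1/576)(X + [Λ,X])`,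
`Λ` diagonal, `A² = A`, `B(B-1)(B-2) = 0`, one has `Tr X = 4(62β₁ + 124β₂ - 123α)` and
`Tr Λ = d - α/2 - (β₁+2β₂)/3`; in particular `Tr X` is an integer divisible by 4 and
congruent to `4α` mod 248. -/
theorem statement5 (d : ℕ) (l : Fin d → ℂ) (Λ A X B : Matrix (Fin d) (Fin d) ℂ)
    (hΛ : Λ = Matrix.diagonal l)
    (hAX : A = (31/36 : ℂ) • (1 - Λ) - (1/864 : ℂ) • (X + (Λ * X - X * Λ)))
    (hBX : B = (41/24 : ℂ) • (1 - Λ) + (1/576 : ℂ) • (X + (Λ * X - X * Λ)))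
    (hA2 : A * A = A) (hB3 : B * (B - 1) * (B - 2) = 0)
    (α β₁ β₂ : ℕ)
    (hα : (α : ℂ) = A.trace)
    (hβ₁ : (β₁ : ℂ) = 2 * B.trace - (B * B).trace)
    (hβ₂ : (β₂ : ℂ) = ((B * B).trace - B.trace) / 2) :
    X.trace = 4 * (62 * (β₁ : ℂ) + 124 * (β₂ : ℂ) - 123 * (α : ℂ)) ∧
    Λ.trace = (d : ℂ) - (α : ℂ) / 2 - ((β₁ : ℂ) + 2 * (β₂ : ℂ)) / 3 ∧
    ∃ mX : ℤ, X.trace = (mX : ℂ) ∧ (4 : ℤ) ∣ mX ∧ mX ≡ 4 * (α : ℤ) [ZMOD 248] := by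
  have hcomm : (Λ * X).trace = (X * Λ).trace := Matrix.trace_mul_comm Λ X
  have hα' : (α : ℂ) = 31/36 * ((d : ℂ) - Λ.trace) - 1/864 * X.trace := by
    rw [hα, hAX]
    simp only [Matrix.trace_sub, Matrix.trace_add, Matrix.trace_smul, Matrix.trace_one,
      smul_eq_mul, Fintype.card_fin]
    linear_combination (-(1:ℂ)/864) * hcomm
  have hB' : B.trace = 41/24 * ((d : ℂ) - Λ.trace) + 1/576 * X.trace := by
    rw [hBX]
    simp only [Matrix.trace_sub, Matrix.trace_add, Matrix.trace_smul, Matrix.trace_one,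
      smul_eq_mul, Fintype.card_fin]
    linear_combination ((1:ℂ)/576) * hcomm
  have hβ : (β₁ : ℂ) + 2 * (β₂ : ℂ) = B.trace := by linear_combination hβ₁ + 2 * hβ₂
  have h1 : X.trace = 4 * (62 * (β₁ : ℂ) + 124 * (β₂ : ℂ) - 123 * (α : ℂ)) := by
    linear_combination 492 * hα' - 248 * hβ - 248 * hB'
  have h2 : Λ.trace = (d : ℂ) - (α : ℂ) / 2 - ((β₁ : ℂ) + 2 * (β₂ : ℂ)) / 3 := by
    linear_combination (1:ℂ)/3 * hβ + 1/3 * hB' + 1/2 * hα'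
  refine ⟨h1, h2, 248 * ((β₁ : ℤ) + 2 * β₂) - 492 * α, ?_, ⟨62 * ((β₁ : ℤ) + 2 * β₂) - 123 * α, by ring⟩, ?_⟩
  · push_cast
    linear_combination h1
  · have : (248 : ℤ) ∣ (4 * (α : ℤ)) - (248 * ((β₁ : ℤ) + 2 * β₂) - 492 * α) :=
      ⟨2 * α - ((β₁ : ℤ) + 2 * β₂), by ring⟩
    exact (Int.modEq_iff_dvd.mpr this)
end
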